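/- arXiv:1909.13079 — 2 statements merged into one kernel-verified Lean document; each statement's English description precedes it below -/
import Mathlib

section
/- Let μ₁ > μ₂ > ... > μ_K be reals in (0,1), M < K, and let δ satisfy 0 < δ < min_{1≤k≤K-1} (μ_k - μ_{k+1})/2. Suppose N is a subset of {1,...,K} of size M with N ≠ {1,...,M}, and suppose ν : {1,...,K} → ℝ satisfies |ν_k - μ_k| < δ for all k ∈ N. Then there exists j ∈ {1,...,M} \ N such that if ν_j < ν_k for some k ∈ N \ {1,...,M}, then |ν_j - μ_j| ≥ δ. -/
lemma dpe_mono (K : ℕ) (μ : Fin K → ℝ) (δ : ℝ)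
    (hgap : ∀ k : Fin K, (h : k.val + 1 < K) → δ < (μ k - μ ⟨k.val + 1, h⟩) / 2)
    (hδ : 0 < δ) :
    ∀ a b : Fin K, a.val < b.val → μ b + 2 * δ < μ a := by
  intro a b hab
  obtain ⟨n, hn⟩ : ∃ n, b.val = a.val + n + 1 := ⟨b.val - a.val - 1, by omega⟩
  induction n generalizing b with
  | zero =>
    have hbK := b.isLt
    have h := hgap a (by omega)
    have : b = ⟨a.val + 1, by omega⟩ := Fin.ext (by simp; omega)
    rw [this]; linarith
  | succ m ih =>
    have hbK := b.isLt
    have hb' : a.val + m + 1 < K := by omega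
    have h1 := ih ⟨a.val + m + 1, hb'⟩ (by simp) rfl
    have h2 := hgap ⟨a.val + m + 1, hb'⟩ (show a.val + m + 1 + 1 < K by omega)
    have hbe : b = ⟨a.val + m + 1 + 1, by omega⟩ := Fin.ext (by simp; omega)
    rw [hbe]
    simp only at h2
    linarith

/-- Key step of Lemma 3 of the DPE paper. Arms are indexed by `Fin K` (index `0` is the
best arm, so the `M` best arms are those with index `< M`). If the current empirical
top-`M` set `N` differs from the true top-`M` set, and all arms in `N` have empirical
means `δ`-close to their true means, then there is a true top-`M` arm `j ∉ N` such that
whenever `ν j < ν k` for some `k ∈ N` with `k` outside the true top `M`, the empirical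
mean of `j` is at least `δ` away from its true mean. -/
theorem dpe_lemma3_key (K M : ℕ) (hMK : M < K)
    (μ ν : Fin K → ℝ) (δ : ℝ) (hδ : 0 < δ)
    (hμ01 : ∀ k, μ k ∈ Set.Ioo (0 : ℝ) 1)
    (hgap : ∀ k : Fin K, (h : k.val + 1 < K) → δ < (μ k - μ ⟨k.val + 1, h⟩) / 2)
    (N : Finset (Fin K)) (hcard : N.card = M)
    (hne : N ≠ Finset.univ.filter (fun k => k.val < M))
    (hν : ∀ k ∈ N, |ν k - μ k| < δ) :
    ∃ j : Fin K, j.val < M ∧ j ∉ N ∧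
      ((∃ k ∈ N, M ≤ k.val ∧ ν j < ν k) → δ ≤ |ν j - μ j|) := by
  set T := Finset.univ.filter (fun k : Fin K => k.val < M) with hT
  have hTE : T = Finset.Iio (⟨M, hMK⟩ : Fin K) := by
    ext k; simp [hT, Finset.mem_Iio, Fin.lt_def]
  have hTcard : T.card = M := by
    rw [hTE, Fin.card_Iio]
  have hnotsub : ¬ T ⊆ N := by
    intro hsub
    exact hne (Finset.eq_of_subset_of_card_le hsub (by omega)).symm
  obtain ⟨j, hjT, hjN⟩ := Finset.not_subset.mp hnotsub
  have hjM : j.val < M := by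
    rw [hT, Finset.mem_filter] at hjT; exact hjT.2
  refine ⟨j, hjM, hjN, ?_⟩
  rintro ⟨k, hkN, hkM, hjk⟩
  have hsep : μ k + 2 * δ < μ j := dpe_mono K μ δ hgap hδ j k (by omega)
  have hk := hν k hkN
  rw [abs_lt] at hk
  rw [abs_sub_comm, le_abs]
  left; linarith
end

section
/- For M ≥ 1, e·M·∑_{s≥1} ⌈(log(sM) + 4·log(log(sM)))·log(sM)⌉·exp(−log(sM) − 4·log(log(sM))) ≤ 15, where the sum is over integers s with sM ≥ 3 (so that log log(sM) > 0). -/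
private lemma dpe_log_three_lb : (1.0931 : ℝ) ≤ Real.log 3 := by
  have h5 : (Real.exp 0.4) ^ (5 : ℕ) = Real.exp 2 := by
    rw [← Real.exp_nat_mul]; norm_num
  have he2 : Real.exp 2 < 7.5 := by
    have h2 : Real.exp 2 = Real.exp 1 ^ (2 : ℕ) := by rw [← Real.exp_nat_mul]; norm_num
    rw [h2]
    nlinarith [Real.exp_one_lt_d9, Real.exp_pos 1]
  have hpow : (Real.exp 0.4) ^ (5 : ℕ) < (1.5 : ℝ) ^ (5 : ℕ) := by
    rw [h5]; nlinarith
  have h15 : Real.exp 0.4 ≤ 1.5 := (lt_of_pow_lt_pow_left₀ 5 (by norm_num) hpow).le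
  have hlog15 : (0.4 : ℝ) ≤ Real.log 1.5 := by
    rw [Real.le_log_iff_exp_le (by norm_num)]; exact h15
  have h3 : Real.log 3 = Real.log 2 + Real.log 1.5 := by
    rw [← Real.log_mul (by norm_num) (by norm_num)]; norm_num
  have h2 := Real.log_two_gt_d9
  rw [h3]; linarith

private lemma dpe_log_le_div_e {x : ℝ} (hx : 0 < x) : Real.log x ≤ x / Real.exp 1 := by
  have h := Real.log_le_sub_one_of_pos (div_pos hx (Real.exp_pos 1))
  rw [Real.log_div (ne_of_gt hx) (ne_of_gt (Real.exp_pos 1)), Real.log_exp] at h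
  linarith

private lemma dpe_term_bound {t : ℝ} (ht : 3 ≤ t) :
    (⌈(Real.log t + 4 * Real.log (Real.log t)) * Real.log t⌉ : ℝ) *
      Real.exp (-Real.log t - 4 * Real.log (Real.log t)) ≤ 3.1 / (t * Real.log t ^ 2) := by
  have ht0 : (0 : ℝ) < t := by linarith
  set L := Real.log t with hLdef
  have hL : (1.0931 : ℝ) ≤ L := le_trans dpe_log_three_lb (Real.log_le_log (by norm_num) ht)
  have hL0 : (0 : ℝ) < L := by linarith
  set l := Real.log L with hldef
  have hl0 : (0 : ℝ) ≤ l := Real.log_nonneg (by linarith)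
  have hexp : Real.exp (-L - 4 * l) = 1 / (t * L ^ 4) := by
    rw [show -L - 4 * l = -(L + (4 : ℕ) * l) by push_cast; ring, Real.exp_neg, Real.exp_add,
      Real.exp_nat_mul, hldef, Real.exp_log hL0, hLdef, Real.exp_log ht0]
    rw [one_div]
  have hceil : (⌈(L + 4 * l) * L⌉ : ℝ) ≤ (L + 4 * l) * L + 1 := (Int.ceil_lt_add_one _).le
  have hnum : (L + 4 * l) * L + 1 ≤ 3.1 * L ^ 2 := by
    rcases le_or_gt L 1.3 with h | h
    · have hlub : l ≤ 0.34 := by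
        have hLe : L ≤ Real.exp 0.34 := le_trans h (by nlinarith [Real.add_one_le_exp (0.34 : ℝ)])
        calc l = Real.log L := rfl
          _ ≤ Real.log (Real.exp 0.34) := Real.log_le_log hL0 hLe
          _ = 0.34 := Real.log_exp _
      nlinarith [sq_nonneg (L - 1.0931), mul_le_mul_of_nonneg_right hlub hL0.le]
    · have hlle : l ≤ L / Real.exp 1 := dpe_log_le_div_e hL0
      have he : (2.7182818283 : ℝ) < Real.exp 1 := Real.exp_one_gt_d9
      have hl2 : l ≤ L / 2.7182818283 := by
        refine le_trans hlle ?_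
        apply div_le_div_of_nonneg_left hL0.le (by norm_num) he.le
      have hLL : (1.69 : ℝ) ≤ L * L := by nlinarith
      have hl2' : 2.7182818283 * l ≤ L := by
        rw [le_div_iff₀ (by norm_num : (0:ℝ) < 2.7182818283)] at hl2
        linarith
      have h4 : 0 ≤ (L - 2.7182818283 * l) * L := mul_nonneg (by linarith) hL0.le
      nlinarith [hLL, h4]
  have hfin : (3.1 * L ^ 2) * (1 / (t * L ^ 4)) = 3.1 / (t * L ^ 2) := by
    field_simp
  calc (⌈(L + 4 * l) * L⌉ : ℝ) * Real.exp (-L - 4 * l)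
      ≤ ((L + 4 * l) * L + 1) * (1 / (t * L ^ 4)) := by
        rw [hexp]; exact mul_le_mul_of_nonneg_right hceil (by positivity)
    _ ≤ (3.1 * L ^ 2) * (1 / (t * L ^ 4)) := mul_le_mul_of_nonneg_right hnum (by positivity)
    _ = 3.1 / (t * L ^ 2) := hfin

private lemma dpe_tele {u v s : ℝ} (hu : 0 < u) (huv : u ≤ v) (hs : 0 < s)
    (h : 1 / s ≤ v - u) : 1 / (s * v ^ 2) ≤ 1 / u - 1 / v := by
  have hv : 0 < v := lt_of_lt_of_le hu huv
  have key : 1 / u - 1 / v = (v - u) / (u * v) := by field_simp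
  rw [key]
  have h1 : 1 / (s * v ^ 2) = (1 / s) / (v * v) := by rw [sq]; field_simp
  rw [h1]
  apply div_le_div₀ (by linarith) h (by positivity)
  exact mul_le_mul_of_nonneg_right huv hv.le

private lemma dpe_partial_bound (M k : ℕ) (hM : 1 ≤ M) (hk1 : 1 ≤ k) (hk3 : 3 ≤ k * M)
    (hiff : ∀ s : ℕ, 3 ≤ s * M ↔ k ≤ s) (n : ℕ) :
    ∑ s ∈ Finset.range n, (if 3 ≤ s * M then
        (⌈(Real.log (s * M) + 4 * Real.log (Real.log (s * M))) * Real.log (s * M)⌉ : ℝ) *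
          Real.exp (-Real.log (s * M) - 4 * Real.log (Real.log (s * M)))
        else 0) ≤
      3.1 / M * ((1 / (k * Real.log (k * M) ^ 2) + 1 / Real.log (k * M)) -
        (if n ≤ k then 1 / (k * Real.log (k * M) ^ 2) + 1 / Real.log (k * M)
          else 1 / Real.log ((n - 1 : ℕ) * M))) := by
  have hM0 : (0:ℝ) < (M:ℝ) := by exact_mod_cast hM
  have hk0 : (1:ℝ) ≤ (k:ℝ) := by exact_mod_cast hk1
  have hkM : (3:ℝ) ≤ (k:ℝ) * M := by exact_mod_cast hk3
  have hvk : (1.0931:ℝ) ≤ Real.log ((k:ℝ) * M) :=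
    dpe_log_three_lb.trans (Real.log_le_log (by norm_num) hkM)
  have hvk0 : (0:ℝ) < Real.log ((k:ℝ) * M) := by linarith
  induction n with
  | zero =>
    rw [if_pos (Nat.zero_le k)]
    simp
  | succ n ih =>
    rw [Finset.sum_range_succ]
    rcases lt_or_ge n k with hnk | hkn
    · rw [if_neg (by rw [hiff]; omega), add_zero, if_pos (by omega : n + 1 ≤ k)]
      rwa [if_pos (le_of_lt hnk)] at ih
    · have hq : 3 ≤ n * M := (hiff n).2 hkn
      have hnM : (3:ℝ) ≤ (n:ℝ) * M := by exact_mod_cast hq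
      have hterm := dpe_term_bound hnM
      rw [if_pos hq, if_neg (by omega : ¬ n + 1 ≤ k)]
      simp only [Nat.add_sub_cancel]
      rcases eq_or_lt_of_le hkn with heq | hlt
      · subst heq
        rw [if_pos le_rfl] at ih
        have key : (3.1:ℝ) / ((k:ℝ) * M * Real.log ((k:ℝ) * M) ^ 2) =
            3.1 / M * (1 / (k * Real.log ((k:ℝ) * M) ^ 2)) := by
          field_simp
        linarith [hterm, ih, key.le, key.ge]
      · rw [if_neg (by omega : ¬ n ≤ k)] at ih
        have hn1 : 1 ≤ n := by omega
        have hn0 : (0:ℝ) < (n:ℝ) := by exact_mod_cast hn1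
        have hq' : 3 ≤ (n - 1) * M := (hiff _).2 (by omega)
        have ha3 : (3:ℝ) ≤ ((n - 1 : ℕ):ℝ) * M := by exact_mod_cast hq'
        have ha0 : (0:ℝ) < ((n - 1 : ℕ):ℝ) * M := by linarith
        have hb0 : (0:ℝ) < (n:ℝ) * M := by linarith
        have hcast : ((n - 1 : ℕ):ℝ) = (n:ℝ) - 1 := by
          push_cast [Nat.cast_sub hn1]; ring
        have hab : ((n - 1 : ℕ):ℝ) * M ≤ (n:ℝ) * M := by
          rw [hcast]; nlinarith
        have hla : (0:ℝ) < Real.log (((n - 1 : ℕ):ℝ) * M) := by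
          have := dpe_log_three_lb.trans (Real.log_le_log (by norm_num) ha3)
          linarith
        have hlab : Real.log (((n - 1 : ℕ):ℝ) * M) ≤ Real.log ((n:ℝ) * M) :=
          Real.log_le_log ha0 hab
        have hdiff : 1 / (n:ℝ) ≤ Real.log ((n:ℝ) * M) - Real.log (((n - 1 : ℕ):ℝ) * M) := by
          have hfr := Real.log_le_sub_one_of_pos (div_pos ha0 hb0)
          rw [Real.log_div (ne_of_gt ha0) (ne_of_gt hb0)] at hfr
          have hval : (((n - 1 : ℕ):ℝ) * M) / ((n:ℝ) * M) - 1 = -(1 / (n:ℝ)) := by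
            rw [hcast]; field_simp; ring
          linarith
        have htele := dpe_tele hla hlab hn0 hdiff
        have h2 : (3.1:ℝ) / ((n:ℝ) * M * Real.log ((n:ℝ) * M) ^ 2) ≤
            3.1 / M * (1 / Real.log (((n - 1 : ℕ):ℝ) * M) - 1 / Real.log ((n:ℝ) * M)) := by
          have heq2 : (3.1:ℝ) / ((n:ℝ) * M * Real.log ((n:ℝ) * M) ^ 2) =
              3.1 / M * (1 / ((n:ℝ) * Real.log ((n:ℝ) * M) ^ 2)) := by
            have hlb0 : Real.log ((n:ℝ) * M) ≠ 0 := ne_of_gt (lt_of_lt_of_le hla hlab)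
            field_simp
          rw [heq2]
          exact mul_le_mul_of_nonneg_left htele (by positivity)
        linarith [hterm, ih, h2]

/-- Numerical bound from Lemma 2 of the DPE paper:
`e M ∑_{s ≥ 1} ⌈(log(sM) + 4 log log(sM)) log(sM)⌉ e^{−log(sM) − 4 log log(sM)} ≤ 15`,
the sum being over integers `s` with `s M ≥ 3` (so that `log log (sM) > 0`). -/
theorem dpe_lemma2_constant_bound (M : ℕ) (hM : 1 ≤ M) :
    Real.exp 1 * M *
      ∑' s : ℕ, (if 3 ≤ s * M then
        (⌈(Real.log (s * M) + 4 * Real.log (Real.log (s * M))) * Real.log (s * M)⌉ : ℝ) *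
          Real.exp (-Real.log (s * M) - 4 * Real.log (Real.log (s * M)))
        else 0) ≤ 15 := by
  obtain ⟨k, hk1, hk3, hiff⟩ : ∃ k : ℕ, 1 ≤ k ∧ 3 ≤ k * M ∧ ∀ s : ℕ, (3 ≤ s * M ↔ k ≤ s) := by
    rcases lt_or_ge M 3 with h | h
    · interval_cases M
      · exact ⟨3, by norm_num, by norm_num, fun s => by omega⟩
      · exact ⟨2, by norm_num, by norm_num, fun s => by omega⟩
    · refine ⟨1, le_rfl, by omega, fun s => ⟨fun h2 => ?_, fun h1 => ?_⟩⟩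
      · by_contra hs
        push_neg at hs
        interval_cases s
        omega
      · calc 3 ≤ M := h
          _ = 1 * M := (one_mul M).symm
          _ ≤ s * M := Nat.mul_le_mul_right M h1
  have hM0 : (0:ℝ) < (M:ℝ) := by exact_mod_cast hM
  have hk0 : (1:ℝ) ≤ (k:ℝ) := by exact_mod_cast hk1
  have hkM : (3:ℝ) ≤ (k:ℝ) * M := by exact_mod_cast hk3
  have hvk : (1.0931:ℝ) ≤ Real.log ((k:ℝ) * M) :=
    dpe_log_three_lb.trans (Real.log_le_log (by norm_num) hkM)
  have hvk0 : (0:ℝ) < Real.log ((k:ℝ) * M) := by linarith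
  have hT0 : (0:ℝ) ≤ 1 / (k * Real.log ((k:ℝ) * M) ^ 2) + 1 / Real.log ((k:ℝ) * M) := by
    have h1 : (0:ℝ) ≤ 1 / (k * Real.log ((k:ℝ) * M) ^ 2) :=
      one_div_nonneg.mpr (mul_nonneg (Nat.cast_nonneg k) (sq_nonneg _))
    have h2 : (0:ℝ) ≤ 1 / Real.log ((k:ℝ) * M) := (one_div_pos.mpr hvk0).le
    linarith
  have hub : ∀ n : ℕ, ∑ s ∈ Finset.range n, (if 3 ≤ s * M then
        (⌈(Real.log (s * M) + 4 * Real.log (Real.log (s * M))) * Real.log (s * M)⌉ : ℝ) *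
          Real.exp (-Real.log (s * M) - 4 * Real.log (Real.log (s * M)))
        else 0) ≤
      3.1 / M * (1 / (k * Real.log ((k:ℝ) * M) ^ 2) + 1 / Real.log ((k:ℝ) * M)) := by
    intro n
    refine (dpe_partial_bound M k hM hk1 hk3 hiff n).trans ?_
    have hψ : (0:ℝ) ≤ (if n ≤ k then
        1 / (k * Real.log ((k:ℝ) * M) ^ 2) + 1 / Real.log ((k:ℝ) * M)
        else 1 / Real.log (((n - 1 : ℕ):ℝ) * M)) := by
      split
      · exact hT0
      · next hc =>
        have hq' : 3 ≤ (n - 1) * M := (hiff _).2 (by omega)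
        have ha3 : (3:ℝ) ≤ ((n - 1 : ℕ):ℝ) * M := by exact_mod_cast hq'
        have hla : (0:ℝ) < Real.log (((n - 1 : ℕ):ℝ) * M) := by
          have := dpe_log_three_lb.trans (Real.log_le_log (by norm_num) ha3)
          linarith
        exact (one_div_pos.mpr hla).le
    have h31 : (0:ℝ) ≤ 3.1 / (M:ℝ) := by positivity
    nlinarith [mul_nonneg h31 hψ]
  have hnonneg : ∀ s : ℕ, (0:ℝ) ≤ (if 3 ≤ s * M then
        (⌈(Real.log (s * M) + 4 * Real.log (Real.log (s * M))) * Real.log (s * M)⌉ : ℝ) *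
          Real.exp (-Real.log (s * M) - 4 * Real.log (Real.log (s * M)))
        else 0) := by
    intro s
    split
    · next h3 =>
      have hs3 : (3:ℝ) ≤ (s:ℝ) * M := by exact_mod_cast h3
      have hL : (1.0931:ℝ) ≤ Real.log ((s:ℝ) * M) :=
        dpe_log_three_lb.trans (Real.log_le_log (by norm_num) hs3)
      have hl0 : (0:ℝ) ≤ Real.log (Real.log ((s:ℝ) * M)) := Real.log_nonneg (by linarith)
      have harg : (0:ℝ) ≤ (Real.log ((s:ℝ) * M) + 4 * Real.log (Real.log ((s:ℝ) * M))) *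
          Real.log ((s:ℝ) * M) := by nlinarith
      exact mul_nonneg (by exact_mod_cast Int.ceil_nonneg harg) (Real.exp_pos _).le
    · exact le_rfl
  have hts := Real.tsum_le_of_sum_range_le hnonneg hub
  have hTb : 1 / ((k:ℝ) * Real.log ((k:ℝ) * M) ^ 2) + 1 / Real.log ((k:ℝ) * M) ≤ 1.76 := by
    have h1 : 1 / ((k:ℝ) * Real.log ((k:ℝ) * M) ^ 2) ≤ 1 / (1.0931 ^ 2 : ℝ) := by
      apply one_div_le_one_div_of_le (by norm_num)
      nlinarith
    have h2 : 1 / Real.log ((k:ℝ) * M) ≤ 1 / (1.0931 : ℝ) :=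
      one_div_le_one_div_of_le (by norm_num) hvk
    have h3 : (1 / (1.0931 ^ 2 : ℝ) + 1 / (1.0931 : ℝ)) ≤ 1.76 := by norm_num
    linarith
  have hE : Real.exp 1 ≤ 2.72 := le_of_lt (Real.exp_one_lt_d9.trans (by norm_num))
  calc Real.exp 1 * M *
      ∑' s : ℕ, (if 3 ≤ s * M then
        (⌈(Real.log (s * M) + 4 * Real.log (Real.log (s * M))) * Real.log (s * M)⌉ : ℝ) *
          Real.exp (-Real.log (s * M) - 4 * Real.log (Real.log (s * M)))
        else 0)
      ≤ Real.exp 1 * M *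
        (3.1 / M * (1 / (k * Real.log ((k:ℝ) * M) ^ 2) + 1 / Real.log ((k:ℝ) * M))) := by
        apply mul_le_mul_of_nonneg_left hts (by positivity)
    _ = Real.exp 1 * 3.1 * (1 / (k * Real.log ((k:ℝ) * M) ^ 2) + 1 / Real.log ((k:ℝ) * M)) := by
        field_simp
    _ ≤ 2.72 * 3.1 * 1.76 := by
        have hstep1 : Real.exp 1 * 3.1 * (1 / (k * Real.log ((k:ℝ) * M) ^ 2) +
            1 / Real.log ((k:ℝ) * M)) ≤ Real.exp 1 * 3.1 * 1.76 :=
          mul_le_mul_of_nonneg_left hTb (by positivity)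
        have hstep2 : Real.exp 1 * 3.1 * 1.76 ≤ 2.72 * 3.1 * 1.76 := by nlinarith
        linarith
    _ ≤ 15 := by norm_num
end
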